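/- Let N ≥ 1, λ_1,…,λ_N ≥ 0 with Σ_k λ_k = 1, S0 > 0, K > 0, μ ∈ ℝ, t > 0, and for each k let ℓ^k be the lognormal density with initial value S0, drift μ, time t and term volatility V_k > 0. Then ∫₀^∞ max(x − K, 0)·(Σ_k λ_k ℓ^k(x)) dx = Σ_k λ_k · (S0·e^{μt}·Φ(d₁^k) − K·Φ(d₂^k)), where Φ is the standard normal cumulative distribution function, d₁^k = (ln(S0/K) + μt + V_k²/2)/V_k and d₂^k = d₁^k − V_k. That is, under the lognormal mixture dynamics model, European call option prices are linear convex combinations of Black–Scholes prices with weights λ_k. -/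

import Mathlib

/-!
Integration is linear, so the mixture price is the `lam`-combination of the prices under the
single lognormal densities, and each of these is the Black–Scholes price. Indeed, under
`x = exp u` the lognormal density becomes the Gaussian density of mean
`θ = log S0 + μ t - V² / 2` and variance `V²`; the payoff factor `exp u` tilts it into
`S0 exp (μ t)` times the Gaussian of mean `θ + V²`, and the masses of these two Gaussians
above `log K` are `Φ(d₁)` and `Φ(d₂)`.
-/

open Real MeasureTheory Set ProbabilityTheory

/-- The standard normal cumulative distribution function. -/
noncomputable def stdNormalCDF (y : ℝ) : ℝ :=
  ∫ u in Set.Iic y, (1 / Real.sqrt (2 * Real.pi)) * Real.exp (-u ^ 2 / 2)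

theorem integral_Ioi_comp_sub_div {E : Type*} [NormedAddCommGroup E] [NormedSpace ℝ E]
    (f : ℝ → E) (m a : ℝ) {V : ℝ} (hV : 0 < V) :
    ∫ u in Ioi a, f ((m - u) / V) = V • ∫ v in Iic ((m - a) / V), f v := by
  set F := (Iic ((m - a) / V)).indicator f
  have hF : ∀ u, F (m / V - u / V) = (Ici a).indicator (fun u ↦ f ((m - u) / V)) u := by
    intro u
    simp only [F, indicator, mem_Iic, mem_Ici, ← sub_div,
      div_le_div_iff_of_pos_right hV, sub_le_sub_iff_left]
  calc ∫ u in Ioi a, f ((m - u) / V)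
      = ∫ u, F (m / V - u / V) := by
        simp only [hF, integral_indicator measurableSet_Ici, integral_Ici_eq_integral_Ioi]
    _ = V • ∫ v, F (m / V - v) := by
        rw [Measure.integral_comp_div (fun v ↦ F (m / V - v)), abs_of_pos hV]
    _ = V • ∫ v in Iic ((m - a) / V), f v := by
        rw [integral_sub_left_eq_self, integral_indicator measurableSet_Iic]

theorem stdNormalCDF_eq_integral_gaussianPDFReal (y : ℝ) :
    stdNormalCDF y = ∫ v in Iic y, gaussianPDFReal 0 1 v := by
  simp [stdNormalCDF, gaussianPDFReal]

theorem gaussianPDFReal_eq_inv_mul_gaussianPDFReal_div (m u : ℝ) {V : ℝ} (hV : 0 < V) :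
    gaussianPDFReal m (V ^ 2).toNNReal u = V⁻¹ * gaussianPDFReal 0 1 ((m - u) / V) := by
  simp only [gaussianPDFReal, Real.coe_toNNReal _ (sq_nonneg V), NNReal.coe_one]
  rw [Real.sqrt_mul (by positivity), Real.sqrt_sq hV.le]
  field_simp
  ring_nf

theorem integral_Ioi_gaussianPDFReal (m a : ℝ) {V : ℝ} (hV : 0 < V) :
    ∫ u in Ioi a, gaussianPDFReal m (V ^ 2).toNNReal u = stdNormalCDF ((m - a) / V) := by
  simp only [gaussianPDFReal_eq_inv_mul_gaussianPDFReal_div m _ hV, integral_const_mul,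
    integral_Ioi_comp_sub_div _ m a hV, smul_eq_mul, stdNormalCDF_eq_integral_gaussianPDFReal]
  field_simp

theorem exp_mul_gaussianPDFReal (θ : ℝ) (v : NNReal) (u : ℝ) :
    exp u * gaussianPDFReal θ v u = exp (θ + v / 2) * gaussianPDFReal (θ + v) v u := by
  rcases eq_or_ne v 0 with rfl | hv
  · simp
  simp only [gaussianPDFReal]
  rw [mul_left_comm, ← exp_add, mul_left_comm, ← exp_add]
  congr 2
  field_simp
  ring

theorem max_sub_mul_eq_indicator (K : ℝ) (g : ℝ → ℝ) :
    (fun x ↦ max (x - K) 0 * g x) = (Ioi K).indicator (fun x ↦ (x - K) * g x) := by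
  ext x
  by_cases hx : x ∈ Ioi K
  · rw [indicator_of_mem hx, max_eq_left (sub_nonneg.2 (le_of_lt hx))]
  · rw [indicator_of_notMem hx, max_eq_right (sub_nonpos.2 (not_lt.1 hx)), zero_mul]

theorem integrableOn_max_sub_mul {K : ℝ} {g : ℝ → ℝ}
    (hg : IntegrableOn (fun x ↦ (x - K) * g x) (Ioi K)) (s : Set ℝ) :
    IntegrableOn (fun x ↦ max (x - K) 0 * g x) s := by
  rw [max_sub_mul_eq_indicator]
  exact (hg.integrable_indicator measurableSet_Ioi).integrableOn

theorem integral_Ioi_zero_max_sub_mul {K : ℝ} (hK : 0 ≤ K) (g : ℝ → ℝ) :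
    ∫ x in Ioi 0, max (x - K) 0 * g x = ∫ x in Ioi K, (x - K) * g x := by
  rw [max_sub_mul_eq_indicator, setIntegral_indicator measurableSet_Ioi, Ioi_inter_Ioi,
    max_eq_right hK]

noncomputable def lognormalPDF (S0 μ t V x : ℝ) : ℝ :=
  1 / (√(2 * π) * x * V) * exp (-(log (x / S0) - μ * t + V ^ 2 / 2) ^ 2 / (2 * V ^ 2))

noncomputable def blackScholesCall (S0 K μ t V : ℝ) : ℝ :=
  S0 * exp (μ * t) * stdNormalCDF ((log (S0 / K) + μ * t + V ^ 2 / 2) / V)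
    - K * stdNormalCDF ((log (S0 / K) + μ * t + V ^ 2 / 2) / V - V)

section Lognormal

variable {S0 K V : ℝ} (μ t : ℝ)

theorem exp_mul_lognormalPDF_exp (hS0 : 0 < S0) (hV : 0 < V) (u : ℝ) :
    exp u * lognormalPDF S0 μ t V (exp u) =
      gaussianPDFReal (log S0 + μ * t - V ^ 2 / 2) (V ^ 2).toNNReal u := by
  simp only [lognormalPDF, gaussianPDFReal, Real.coe_toNNReal _ (sq_nonneg V),
    log_div (exp_pos u).ne' hS0.ne', log_exp]
  rw [Real.sqrt_mul (by positivity : (0 : ℝ) ≤ 2 * π), Real.sqrt_sq hV.le]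
  field_simp
  ring_nf

theorem exp_mul_sub_mul_lognormalPDF_exp (hS0 : 0 < S0) (hV : 0 < V) (u : ℝ) :
    exp u * ((exp u - K) * lognormalPDF S0 μ t V (exp u)) =
      S0 * exp (μ * t) * gaussianPDFReal (log S0 + μ * t + V ^ 2 / 2) (V ^ 2).toNNReal u
        - K * gaussianPDFReal (log S0 + μ * t - V ^ 2 / 2) (V ^ 2).toNNReal u := by
  have htilt := exp_mul_gaussianPDFReal (log S0 + μ * t - V ^ 2 / 2) (V ^ 2).toNNReal u
  rw [Real.coe_toNNReal _ (sq_nonneg V)] at htilt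
  have hmean : log S0 + μ * t - V ^ 2 / 2 + V ^ 2 = log S0 + μ * t + V ^ 2 / 2 := by ring
  have hscale : exp (log S0 + μ * t - V ^ 2 / 2 + V ^ 2 / 2) = S0 * exp (μ * t) := by
    rw [sub_add_cancel, exp_add, exp_log hS0]
  rw [mul_left_comm, exp_mul_lognormalPDF_exp μ t hS0 hV, sub_mul, htilt, hmean, hscale]

theorem integrableOn_Ioi_sub_mul_lognormalPDF (hS0 : 0 < S0) (hK : 0 < K) (hV : 0 < V) :
    IntegrableOn (fun x ↦ (x - K) * lognormalPDF S0 μ t V x) (Ioi K) := by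
  rw [← exp_log hK, ← integrableOn_comp_exp_Ioi]
  simp only [smul_eq_mul, exp_log hK, exp_mul_sub_mul_lognormalPDF_exp μ t hS0 hV]
  exact (((integrable_gaussianPDFReal _ _).const_mul _).sub
    ((integrable_gaussianPDFReal _ _).const_mul _)).integrableOn

theorem integral_Ioi_sub_mul_lognormalPDF (hS0 : 0 < S0) (hK : 0 < K) (hV : 0 < V) :
    ∫ x in Ioi K, (x - K) * lognormalPDF S0 μ t V x = blackScholesCall S0 K μ t V := by
  rw [← exp_log hK, ← integral_comp_exp_Ioi]
  simp only [smul_eq_mul, exp_log hK, exp_mul_sub_mul_lognormalPDF_exp μ t hS0 hV]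
  rw [integral_sub, integral_const_mul, integral_const_mul, integral_Ioi_gaussianPDFReal _ _ hV,
    integral_Ioi_gaussianPDFReal _ _ hV, blackScholesCall, log_div hS0.ne' hK.ne']
  · congr 3 <;> field_simp <;> ring
  all_goals exact ((integrable_gaussianPDFReal _ _).const_mul _).integrableOn

end Lognormal

theorem lognormal_mixture_call_price_general
    (N : ℕ) (lam V : Fin N → ℝ)
    (S0 K μ t : ℝ) (hS0 : 0 < S0) (hK : 0 < K) (hV : ∀ k, 0 < V k) :
    ∫ x in Set.Ioi (0 : ℝ),
      max (x - K) 0 * (∑ k, lam k * ((1 / (Real.sqrt (2 * Real.pi) * x * V k)) *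
        Real.exp (-(Real.log (x / S0) - μ * t + (V k) ^ 2 / 2) ^ 2 / (2 * (V k) ^ 2)))) =
      ∑ k, lam k *
        (S0 * Real.exp (μ * t) *
            stdNormalCDF ((Real.log (S0 / K) + μ * t + (V k) ^ 2 / 2) / V k)
          - K * stdNormalCDF ((Real.log (S0 / K) + μ * t + (V k) ^ 2 / 2) / V k - V k)) := by
  have hmix : ∀ x, max (x - K) 0 * ∑ k, lam k * lognormalPDF S0 μ t (V k) x =
      ∑ k, lam k * (max (x - K) 0 * lognormalPDF S0 μ t (V k) x) := fun x ↦ by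
    rw [Finset.mul_sum]
    exact Finset.sum_congr rfl fun k _ ↦ mul_left_comm _ _ _
  have hint : ∀ k, IntegrableOn (fun x ↦ (x - K) * lognormalPDF S0 μ t (V k) x) (Ioi K) :=
    fun k ↦ integrableOn_Ioi_sub_mul_lognormalPDF μ t hS0 hK (hV k)
  change ∫ x in Ioi 0, max (x - K) 0 * ∑ k, lam k * lognormalPDF S0 μ t (V k) x =
    ∑ k, lam k * blackScholesCall S0 K μ t (V k)
  simp only [hmix]
  rw [integral_finsetSum _ fun k _ ↦ (integrableOn_max_sub_mul (hint k) _).const_mul (lam k)]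
  refine Finset.sum_congr rfl fun k _ ↦ ?_
  rw [integral_const_mul, integral_Ioi_zero_max_sub_mul hK.le,
    integral_Ioi_sub_mul_lognormalPDF μ t hS0 hK (hV k)]

/-- Under the lognormal mixture dynamics model, European call option prices are linear
convex combinations of Black–Scholes prices with weights `lam k`. -/
theorem lognormal_mixture_call_price
    (N : ℕ) (hN : 1 ≤ N) (lam V : Fin N → ℝ)
    (S0 K μ t : ℝ) (hS0 : 0 < S0) (hK : 0 < K) (ht : 0 < t)
    (hlam : ∀ k, 0 ≤ lam k) (hsum : ∑ k, lam k = 1) (hV : ∀ k, 0 < V k) :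
    ∫ x in Set.Ioi (0 : ℝ),
      max (x - K) 0 * (∑ k, lam k * ((1 / (Real.sqrt (2 * Real.pi) * x * V k)) *
        Real.exp (-(Real.log (x / S0) - μ * t + (V k) ^ 2 / 2) ^ 2 / (2 * (V k) ^ 2)))) =
      ∑ k, lam k *
        (S0 * Real.exp (μ * t) *
            stdNormalCDF ((Real.log (S0 / K) + μ * t + (V k) ^ 2 / 2) / V k)
          - K * stdNormalCDF ((Real.log (S0 / K) + μ * t + (V k) ^ 2 / 2) / V k - V k)) :=
  lognormal_mixture_call_price_general N lam V S0 K μ t hS0 hK hV
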